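/- Let H be a real Hilbert space, C ⊆ H a nonempty closed convex set, and f : H → ℝ differentiable with L-Lipschitz gradient (L > 0), bounded below on C by f*. Fix 0 < μ ≤ 1/L and x₀ ∈ C, and define the projected gradient iterates x_{t+1} = proj_C(x_t − μ·∇f(x_t)) with gradient mapping 𝒫(μ, x_t) = (x_t − x_{t+1})/μ. Then for every T ≥ 1, min_{0 ≤ t < T} ‖𝒫(μ, x_t)‖² ≤ 2·(f(x₀) − f*)/(μ·T). -/

import Mathlib

/-! The projection onto `C` satisfies the variational inequality `⟪z - p, w - p⟫ ≤ 0` for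
`p = proj_C z` and `w ∈ C`; with `z = xₜ - μ ∇f(xₜ)` and `w = xₜ` it gives
`‖xₜ - xₜ₊₁‖² ≤ μ ⟪∇f(xₜ), xₜ - xₜ₊₁⟫`. Together with the descent lemma and `Lμ ≤ 1`, each step
decreases `f` by at least `μ/2 ‖𝒫(μ, xₜ)‖²`. Telescoping over `t < T` and using `f ≥ f*` on `C`,
`T` times the smallest of these decreases is at most `f(x₀) - f*`. -/

open Finset Set
open scoped InnerProductSpace

theorem le_add_inner_gradient_add_sq_of_lipschitz_gradient {H : Type*} [NormedAddCommGroup H]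
    [InnerProductSpace ℝ H] [CompleteSpace H] {f : H → ℝ} {L : ℝ} (hf : Differentiable ℝ f)
    (hLip : ∀ u v : H, ‖gradient f u - gradient f v‖ ≤ L * ‖u - v‖) (x y : H) :
    f y ≤ f x + ⟪gradient f x, y - x⟫_ℝ + L / 2 * ‖y - x‖ ^ 2 := by
  set d := y - x
  -- `φ` is antitone on `[0, 1]`, and `φ 1 ≤ φ 0` is the claim.
  let φ : ℝ → ℝ := fun s ↦ f (x + s • d) - s * ⟪gradient f x, d⟫_ℝ - L / 2 * s ^ 2 * ‖d‖ ^ 2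
  let φ' : ℝ → ℝ := fun s ↦ ⟪gradient f (x + s • d) - gradient f x, d⟫_ℝ - L * s * ‖d‖ ^ 2
  have hφ : ∀ s, HasDerivAt φ (φ' s) s := by
    intro s
    have hline : HasDerivAt (fun s : ℝ ↦ x + s • d) d s := by
      simpa using ((hasDerivAt_id s).smul_const d).const_add x
    have hfline := (hf (x + s • d)).hasGradientAt.hasFDerivAt.comp_hasDerivAt s hline
    have := ((hfline.sub ((hasDerivAt_id s).mul_const ⟪gradient f x, d⟫_ℝ)).sub
      (((hasDerivAt_pow 2 s).const_mul (L / 2)).mul_const (‖d‖ ^ 2)))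
    refine this.congr_deriv ?_
    simp only [φ', inner_sub_left, InnerProductSpace.toDual_apply_apply]
    ring
  have hφ'_nonpos : ∀ s ∈ interior (Icc (0 : ℝ) 1), φ' s ≤ 0 := by
    intro s hs
    rw [interior_Icc] at hs
    have hgrad : ‖gradient f (x + s • d) - gradient f x‖ ≤ L * s * ‖d‖ := by
      simpa [norm_smul, abs_of_pos hs.1, mul_assoc] using hLip (x + s • d) x
    suffices ⟪gradient f (x + s • d) - gradient f x, d⟫_ℝ ≤ L * s * ‖d‖ ^ 2 by
      simpa only [φ', sub_nonpos]
    calc ⟪gradient f (x + s • d) - gradient f x, d⟫_ℝ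
        ≤ ‖gradient f (x + s • d) - gradient f x‖ * ‖d‖ := real_inner_le_norm _ _
      _ ≤ L * s * ‖d‖ * ‖d‖ := by gcongr
      _ = L * s * ‖d‖ ^ 2 := by ring
  have hanti : AntitoneOn φ (Icc 0 1) :=
    antitoneOn_of_hasDerivWithinAt_nonpos (convex_Icc 0 1)
      (fun s _ ↦ (hφ s).continuousAt.continuousWithinAt)
      (fun s _ ↦ (hφ s).hasDerivWithinAt) hφ'_nonpos
  have hφ01 := hanti (left_mem_Icc.2 zero_le_one) (right_mem_Icc.2 zero_le_one) zero_le_one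
  simp only [φ, zero_smul, one_smul, add_zero, zero_mul, one_mul, sub_zero, d,
    add_sub_cancel] at hφ01
  linarith

theorem real_inner_sub_le_zero_of_forall_norm_sub_le {F : Type*} [NormedAddCommGroup F]
    [InnerProductSpace ℝ F] {K : Set F} (hK : Convex ℝ K) {u v : F} (hv : v ∈ K)
    (hmin : ∀ w ∈ K, ‖u - v‖ ≤ ‖u - w‖) : ∀ w ∈ K, ⟪u - v, w - v⟫_ℝ ≤ 0 := by
  have : Nonempty K := ⟨⟨v, hv⟩⟩
  refine (norm_eq_iInf_iff_real_inner_le_zero hK hv).mp (le_antisymm ?_ ?_)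
  · exact le_ciInf fun w ↦ hmin w w.2
  · exact ciInf_le (f := fun w : K ↦ ‖u - w‖)
      ⟨0, by rintro _ ⟨w, rfl⟩; exact norm_nonneg _⟩ ⟨v, hv⟩

section ProjectedGradient

variable {H : Type*} [NormedAddCommGroup H] [InnerProductSpace ℝ H] [CompleteSpace H]
  {f : H → ℝ} {L μ : ℝ} {C : Set H}

theorem sq_norm_sub_le_of_projected_gradient_step (hC : Convex ℝ C) {u v : H} (hu : u ∈ C)
    (hv : v ∈ C) (hproj : ∀ w ∈ C, ‖u - μ • gradient f u - v‖ ≤ ‖u - μ • gradient f u - w‖) :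
    ‖u - v‖ ^ 2 ≤ μ * ⟪gradient f u, u - v⟫_ℝ := by
  have hvi := real_inner_sub_le_zero_of_forall_norm_sub_le hC hv hproj u hu
  have hexpand :
      ⟪u - μ • gradient f u - v, u - v⟫_ℝ = ‖u - v‖ ^ 2 - μ * ⟪gradient f u, u - v⟫_ℝ := by
    rw [sub_right_comm, inner_sub_left, real_inner_smul_left, real_inner_self_eq_norm_sq]
  linarith

theorem projected_gradient_sufficient_decrease (hf : Differentiable ℝ f)
    (hLip : ∀ u v : H, ‖gradient f u - gradient f v‖ ≤ L * ‖u - v‖) (hμ : 0 < μ)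
    (hLμ : L * μ ≤ 1) (hC : Convex ℝ C) {u v : H} (hu : u ∈ C) (hv : v ∈ C)
    (hproj : ∀ w ∈ C, ‖u - μ • gradient f u - v‖ ≤ ‖u - μ • gradient f u - w‖) :
    μ / 2 * ‖μ⁻¹ • (u - v)‖ ^ 2 ≤ f u - f v := by
  have hstep := sq_norm_sub_le_of_projected_gradient_step hC hu hv hproj
  have hdescent := le_add_inner_gradient_add_sq_of_lipschitz_gradient hf hLip u v
  rw [← neg_sub u v, inner_neg_right, norm_neg] at hdescent
  have hsq : μ / 2 * ‖μ⁻¹ • (u - v)‖ ^ 2 = ‖u - v‖ ^ 2 / (2 * μ) := by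
    rw [norm_smul, mul_pow, norm_inv, Real.norm_of_nonneg hμ.le]
    field_simp
  rw [hsq, div_le_iff₀ (by positivity)]
  nlinarith [mul_le_mul_of_nonneg_right hLμ (sq_nonneg ‖u - v‖)]

end ProjectedGradient

theorem exists_lt_mul_le_sub_of_le_sub_succ {a b : ℕ → ℝ} (h : ∀ t, a t ≤ b t - b (t + 1))
    {T : ℕ} (hT : 1 ≤ T) : ∃ t < T, T * a t ≤ b 0 - b T := by
  have hsum : ∑ t ∈ range T, T * a t ≤ ∑ _t ∈ range T, (b 0 - b T) := by
    rw [← mul_sum, sum_const, card_range, nsmul_eq_mul, ← sum_range_sub']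
    gcongr with t
    exact h t
  obtain ⟨t, ht, hle⟩ := exists_le_of_sum_le (nonempty_range_iff.2 (by omega)) hsum
  exact ⟨t, mem_range.1 ht, hle⟩

theorem projected_gradient_mapping_rate_general
    {H : Type*} [NormedAddCommGroup H] [InnerProductSpace ℝ H] [CompleteSpace H]
    (C : Set H) (hCconv : Convex ℝ C)
    (f : H → ℝ) (L : ℝ) (hL : 0 < L)
    (hdiff : Differentiable ℝ f)
    (hLip : ∀ u v : H, ‖gradient f u - gradient f v‖ ≤ L * ‖u - v‖)
    (fstar : ℝ) (hbdd : ∀ y ∈ C, fstar ≤ f y)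
    (μ : ℝ) (hμ : 0 < μ) (hμL : μ ≤ 1 / L)
    (x : ℕ → H) (hx0 : x 0 ∈ C)
    (hmem : ∀ t : ℕ, x (t + 1) ∈ C)
    (hproj : ∀ t : ℕ, ∀ y ∈ C,
      ‖x t - μ • gradient f (x t) - x (t + 1)‖ ≤ ‖x t - μ • gradient f (x t) - y‖) :
    ∀ T : ℕ, 1 ≤ T →
      ∃ t < T, ‖μ⁻¹ • (x t - x (t + 1))‖ ^ 2 ≤ 2 * (f (x 0) - fstar) / (μ * T) := by
  intro T hT
  have hC : ∀ t, x t ∈ C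
    | 0 => hx0
    | t + 1 => hmem t
  have hLμ : L * μ ≤ 1 := by rwa [le_div_iff₀ hL, mul_comm] at hμL
  obtain ⟨t, htT, ht⟩ := exists_lt_mul_le_sub_of_le_sub_succ (b := fun t ↦ f (x t))
    (fun t ↦ projected_gradient_sufficient_decrease hdiff hLip hμ hLμ hCconv (hC t)
      (hmem t) (hproj t)) hT
  refine ⟨t, htT, ?_⟩
  have hT0 : (0 : ℝ) < T := by exact_mod_cast hT
  rw [le_div_iff₀ (by positivity)]
  nlinarith [hbdd _ (hC T)]

/-- `O(1/√T)` convergence rate of the gradient mapping for projected gradient descent on an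
`L`-smooth function bounded below on a nonempty closed convex set. -/
theorem projected_gradient_mapping_rate
    {H : Type*} [NormedAddCommGroup H] [InnerProductSpace ℝ H] [CompleteSpace H]
    (C : Set H) (hCclosed : IsClosed C) (hCconv : Convex ℝ C) (hCne : C.Nonempty)
    (f : H → ℝ) (L : ℝ) (hL : 0 < L)
    (hdiff : Differentiable ℝ f)
    (hLip : ∀ u v : H, ‖gradient f u - gradient f v‖ ≤ L * ‖u - v‖)
    (fstar : ℝ) (hbdd : ∀ y ∈ C, fstar ≤ f y)
    (μ : ℝ) (hμ : 0 < μ) (hμL : μ ≤ 1 / L)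
    (x : ℕ → H) (hx0 : x 0 ∈ C)
    (hmem : ∀ t : ℕ, x (t + 1) ∈ C)
    (hproj : ∀ t : ℕ, ∀ y ∈ C,
      ‖x t - μ • gradient f (x t) - x (t + 1)‖ ≤ ‖x t - μ • gradient f (x t) - y‖) :
    ∀ T : ℕ, 1 ≤ T →
      ∃ t < T, ‖μ⁻¹ • (x t - x (t + 1))‖ ^ 2 ≤ 2 * (f (x 0) - fstar) / (μ * T) :=
  projected_gradient_mapping_rate_general C hCconv f L hL hdiff hLip fstar hbdd μ hμ hμL x hx0 hmem
    hproj
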